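/- arXiv:2309.04280 — 11 statements merged into one kernel-verified Lean document; each statement's English description precedes it below -/
import Mathlib

section
/- Let ⊙ be a t-norm and θ a ⊙-transitive fuzzy relation on U, i.e. θ(x,y) ⊙ θ(y,z) ≤ θ(x,z) for all x,y,z. Let F : U → [0,1] satisfy F(a) ≥ θ(a,y) ⊙ F(y) for all a,y ∈ U. Then the relation R(F) := {(a,b) : F(a) = θ(a,b) ⊙ F(b)} is transitive. -/
open unitInterval

instance : Fact ((0:ℝ) ≤ 1) := ⟨zero_le_one⟩

theorem stmt1 {U : Type*} (θ : U → U → unitInterval)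
    (odot : unitInterval → unitInterval → unitInterval)
    (hoc : ∀ x y, odot x y = odot y x)
    (hoa : ∀ x y z, odot (odot x y) z = odot x (odot y z))
    (hom : ∀ x₁ x₂ y₁ y₂ : unitInterval, x₁ ≤ x₂ → y₁ ≤ y₂ → odot x₁ y₁ ≤ odot x₂ y₂)
    (hou : ∀ x, odot 1 x = x)
    (htrans : ∀ x y z, odot (θ x y) (θ y z) ≤ θ x z)
    (F : U → unitInterval)
    (hF : ∀ a y, odot (θ a y) (F y) ≤ F a) :
    ∀ a b c, F a = odot (θ a b) (F b) → F b = odot (θ b c) (F c) →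
      F a = odot (θ a c) (F c) := by
  intro a b c hab hbc
  refine le_antisymm ?_ (hF a c)
  calc F a = odot (odot (θ a b) (θ b c)) (F c) := by rw [hab, hbc, hoa]
    _ ≤ odot (θ a c) (F c) := hom _ _ _ _ (htrans a b c) le_rfl
end

section
/- Let ⊙ be a t-norm, n an involutive negator, ⊕ a t-conorm that is n-dual to ⊙ (n(x ⊕ y) = n(x) ⊙ n(y)), and let ▷ be the S-implicator x ▷ y := n(x) ⊕ y. If θ is ⊙-transitive and G : U → [0,1] satisfies G(a) ≤ θ(a,y) ▷ G(y) for all a,y ∈ U, then the relation ρ(G) := {(a,b) : G(a) = θ(a,b) ▷ G(b)} is transitive. -/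
open unitInterval

theorem stmt2 {U : Type*} (θ : U → U → unitInterval)
    (odot oplus : unitInterval → unitInterval → unitInterval)
    (n : unitInterval → unitInterval)
    (hoc : ∀ x y, odot x y = odot y x)
    (hoa : ∀ x y z, odot (odot x y) z = odot x (odot y z))
    (hom : ∀ x₁ x₂ y₁ y₂ : unitInterval, x₁ ≤ x₂ → y₁ ≤ y₂ → odot x₁ y₁ ≤ odot x₂ y₂)
    (hou : ∀ x, odot 1 x = x)
    (hpc : ∀ x y, oplus x y = oplus y x)
    (hpa : ∀ x y z, oplus (oplus x y) z = oplus x (oplus y z))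
    (hpm : ∀ x₁ x₂ y₁ y₂ : unitInterval, x₁ ≤ x₂ → y₁ ≤ y₂ → oplus x₁ y₁ ≤ oplus x₂ y₂)
    (hpu : ∀ x, oplus 0 x = x)
    (hna : Antitone n) (hn0 : n 0 = 1) (hn1 : n 1 = 0) (hni : ∀ x, n (n x) = x)
    (hdual : ∀ x y, n (oplus x y) = odot (n x) (n y))
    (htrans : ∀ x y z, odot (θ x y) (θ y z) ≤ θ x z)
    (G : U → unitInterval)
    (hG : ∀ a y, G a ≤ oplus (n (θ a y)) (G y)) :
    ∀ a b c, G a = oplus (n (θ a b)) (G b) → G b = oplus (n (θ b c)) (G c) →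
      G a = oplus (n (θ a c)) (G c) := by
  intro a b c hab hbc
  have hdual' : ∀ x y, n (odot x y) = oplus (n x) (n y) := by
    intro x y
    have := hdual (n x) (n y)
    rw [hni, hni] at this
    rw [← this, hni]
  have h1 : n (θ a c) ≤ oplus (n (θ a b)) (n (θ b c)) := by
    rw [← hdual']
    exact hna (htrans a b c)
  have h2 : oplus (n (θ a c)) (G c) ≤ G a := by
    calc oplus (n (θ a c)) (G c) ≤ oplus (oplus (n (θ a b)) (n (θ b c))) (G c) :=
          hpm _ _ _ _ h1 le_rfl
      _ = oplus (n (θ a b)) (oplus (n (θ b c)) (G c)) := hpa _ _ _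
      _ = oplus (n (θ a b)) (G b) := by rw [← hbc]
      _ = G a := hab.symm
  exact le_antisymm (hG a c) h2
end

section
/- Let θ be a similarity relation on U, n an involutive negator, x ▷ y = max(n(x), y). Suppose G : U → [0,1] satisfies G(a) ≤ max(n(θ(a,y)), G(y)) for all a,y ∈ U. Then for all a,b ∈ U: G(a) = max(n(θ(a,b)), G(b)) if and only if G(a) ≥ n(θ(a,b)). -/
open unitInterval

theorem stmt5 {U : Type*} (θ : U → U → unitInterval)
    (n : unitInterval → unitInterval)
    (hna : Antitone n) (hn0 : n 0 = 1) (hn1 : n 1 = 0) (hni : ∀ x, n (n x) = x)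
    (hrefl : ∀ x, θ x x = 1)
    (hsymm : ∀ x y, θ x y = θ y x)
    (htrans : ∀ x y z, θ x y ⊓ θ y z ≤ θ x z)
    (G : U → unitInterval)
    (hG : ∀ a y, G a ≤ n (θ a y) ⊔ G y) :
    ∀ a b, G a = n (θ a b) ⊔ G b ↔ n (θ a b) ≤ G a := by
  intro a b
  constructor
  · intro h; rw [h]; exact le_sup_left
  · intro h
    refine le_antisymm (hG a b) (sup_le h ?_)
    have := hG b a
    rw [hsymm b a] at this
    exact this.trans (sup_le h le_rfl)
end

section
/- In the setting of a ⊙-similarity relation θ with fixed points F = θ̄(F), G = θ̲(G) for a left-continuous t-norm and its R-implicator (or an S-implicator from an n-dual pair): if E₁, E₂ are distinct equivalence classes of E(F) = R(F) ∩ R(F)⁻¹ with E₁ ≤_{R(F)} E₂ (meaning (a₁,a₂) ∈ R(F) for all a₁ ∈ E₁, a₂ ∈ E₂), then F(a₁) < F(a₂) for all a₁ ∈ E₁, a₂ ∈ E₂. -/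
open unitInterval

theorem stmt10 {U : Type*} (θ : U → U → unitInterval)
    (odot imp : unitInterval → unitInterval → unitInterval)
    (hoc : ∀ x y, odot x y = odot y x)
    (hoa : ∀ x y z, odot (odot x y) z = odot x (odot y z))
    (hom : ∀ x₁ x₂ y₁ y₂ : unitInterval, x₁ ≤ x₂ → y₁ ≤ y₂ → odot x₁ y₁ ≤ odot x₂ y₂)
    (hou : ∀ x, odot 1 x = x)
    (hi1 : ∀ x₁ x₂ y : unitInterval, x₁ ≤ x₂ → imp x₂ y ≤ imp x₁ y)
    (hi2 : ∀ x y₁ y₂ : unitInterval, y₁ ≤ y₂ → imp x y₁ ≤ imp x y₂)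
    (hi00 : imp 0 0 = 1) (hi01 : imp 0 1 = 1) (hi11 : imp 1 1 = 1) (hi10 : imp 1 0 = 0)
    (hib : ∀ x, imp 1 x = x)
    (hsetting :
      ((∀ (s : Set unitInterval) (x : unitInterval), odot (sSup s) x = ⨆ z ∈ s, odot z x) ∧
        (∀ x y : unitInterval, imp x y = sSup {z : unitInterval | odot x z ≤ y})) ∨
      (∃ (n : unitInterval → unitInterval) (oplus : unitInterval → unitInterval → unitInterval), (Antitone n ∧ n 0 = 1 ∧ n 1 = 0 ∧ (∀ x : unitInterval, n (n x) = x)) ∧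
        ((∀ x y : unitInterval, oplus x y = oplus y x) ∧
         (∀ x y z : unitInterval, oplus (oplus x y) z = oplus x (oplus y z)) ∧
         (∀ x : unitInterval, oplus 0 x = x) ∧
         (∀ x₁ x₂ y₁ y₂ : unitInterval, x₁ ≤ x₂ → y₁ ≤ y₂ → oplus x₁ y₁ ≤ oplus x₂ y₂)) ∧
        (∀ x y : unitInterval, n (oplus x y) = odot (n x) (n y)) ∧
        (∀ x y : unitInterval, imp x y = oplus (n x) y)))
    (hrefl : ∀ x, θ x x = 1)
    (hsymm : ∀ x y, θ x y = θ y x)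
    (htrans : ∀ x y z, odot (θ x y) (θ y z) ≤ θ x z)
    (F : U → unitInterval)
    (hFfix : ∀ x, (⨆ y, odot (θ x y) (F y)) = F x) :
    ∀ a₁ a₂, F a₁ = odot (θ a₁ a₂) (F a₂) → ¬ (F a₂ = odot (θ a₂ a₁) (F a₁)) →
      F a₁ < F a₂ := by
  intro a₁ a₂ h1 h2
  have hle : F a₁ ≤ F a₂ := by
    rw [h1]
    calc odot (θ a₁ a₂) (F a₂) ≤ odot 1 (F a₂) := hom _ _ _ _ le_one' le_rfl
    _ = F a₂ := hou _
  refine lt_of_le_of_ne hle fun heq => h2 ?_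
  rw [← heq, hsymm]
  nth_rewrite 2 [heq]
  exact h1
end

section
/- Let θ be a ⊙-similarity relation, F = θ̄(F), G = θ̲(G), and suppose F, G have finite ranges. If E is an equivalence class of E(F) = R(F) ∩ R(F)⁻¹ that is maximal in the natural order on U/E(F), then for all a,b ∈ E and z ∉ E: θ(a,z) ⊙ F(z) < F(a) = F(b) ≤ θ(a,b) and θ(a,z) < θ(a,b). -/
open unitInterval

theorem stmt11 {U : Type*} (θ : U → U → unitInterval)
    (odot imp : unitInterval → unitInterval → unitInterval)
    (hoc : ∀ x y, odot x y = odot y x)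
    (hoa : ∀ x y z, odot (odot x y) z = odot x (odot y z))
    (hom : ∀ x₁ x₂ y₁ y₂ : unitInterval, x₁ ≤ x₂ → y₁ ≤ y₂ → odot x₁ y₁ ≤ odot x₂ y₂)
    (hou : ∀ x, odot 1 x = x)
    (hi1 : ∀ x₁ x₂ y : unitInterval, x₁ ≤ x₂ → imp x₂ y ≤ imp x₁ y)
    (hi2 : ∀ x y₁ y₂ : unitInterval, y₁ ≤ y₂ → imp x y₁ ≤ imp x y₂)
    (hi00 : imp 0 0 = 1) (hi01 : imp 0 1 = 1) (hi11 : imp 1 1 = 1) (hi10 : imp 1 0 = 0)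
    (hib : ∀ x, imp 1 x = x)
    (hsetting :
      ((∀ (s : Set unitInterval) (x : unitInterval), odot (sSup s) x = ⨆ z ∈ s, odot z x) ∧
        (∀ x y : unitInterval, imp x y = sSup {z : unitInterval | odot x z ≤ y})) ∨
      (∃ (n : unitInterval → unitInterval) (oplus : unitInterval → unitInterval → unitInterval), (Antitone n ∧ n 0 = 1 ∧ n 1 = 0 ∧ (∀ x : unitInterval, n (n x) = x)) ∧
        ((∀ x y : unitInterval, oplus x y = oplus y x) ∧
         (∀ x y z : unitInterval, oplus (oplus x y) z = oplus x (oplus y z)) ∧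
         (∀ x : unitInterval, oplus 0 x = x) ∧
         (∀ x₁ x₂ y₁ y₂ : unitInterval, x₁ ≤ x₂ → y₁ ≤ y₂ → oplus x₁ y₁ ≤ oplus x₂ y₂)) ∧
        (∀ x y : unitInterval, n (oplus x y) = odot (n x) (n y)) ∧
        (∀ x y : unitInterval, imp x y = oplus (n x) y)))
    (hrefl : ∀ x, θ x x = 1)
    (hsymm : ∀ x y, θ x y = θ y x)
    (htrans : ∀ x y z, odot (θ x y) (θ y z) ≤ θ x z)
    (F G : U → unitInterval)
    (hFfix : ∀ x, (⨆ y, odot (θ x y) (F y)) = F x)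
    (hGfix : ∀ x, (⨅ y, imp (θ x y) (G y)) = G x)
    (hFfin : (Set.range F).Finite) (hGfin : (Set.range G).Finite)
    (E : Set U)
    (hclass : ∃ a, a ∈ E ∧
      E = {x | F x = odot (θ x a) (F a) ∧ F a = odot (θ a x) (F x)})
    (hmax : ∀ a ∈ E, ∀ z, F a = odot (θ a z) (F z) → z ∈ E) :
    ∀ a ∈ E, ∀ b ∈ E, ∀ z ∉ E,
      odot (θ a z) (F z) < F a ∧ F a = F b ∧ F b ≤ θ a b ∧ θ a z < θ a b := by
  obtain ⟨a₀, ha₀, hE⟩ := hclass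
  have hsup : ∀ x y, odot (θ x y) (F y) ≤ F x := fun x y =>
    (le_iSup (fun y => odot (θ x y) (F y)) y).trans (hFfix x).le
  have hle1 : ∀ x y : unitInterval, odot x y ≤ y := fun x y => by
    calc odot x y ≤ odot 1 y := hom _ _ _ _ le_one' le_rfl
      _ = y := hou y
  have hle2 : ∀ x y : unitInterval, odot x y ≤ x := fun x y => (hoc x y) ▸ hle1 y x
  have hmem : ∀ x ∈ E, F x = odot (θ x a₀) (F a₀) ∧ F a₀ = odot (θ a₀ x) (F x) := by
    intro x hx; rw [hE] at hx; exact hx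
  have hFeq : ∀ x ∈ E, F x = F a₀ := fun x hx =>
    le_antisymm ((hmem x hx).1.le.trans (hle1 _ _)) ((hmem x hx).2.le.trans (hle1 _ _))
  intro a ha b hb z hz
  have hFab : F a = F b := (hFeq a ha).trans (hFeq b hb).symm
  have hvs : F a = odot (θ a b) (F b) := by
    refine le_antisymm ?_ (hsup a b)
    calc F a = odot (θ a a₀) (F a₀) := (hmem a ha).1
      _ = odot (θ a a₀) (odot (θ a₀ b) (F b)) := by rw [← (hmem b hb).2]
      _ = odot (odot (θ a a₀) (θ a₀ b)) (F b) := (hoa _ _ _).symm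
      _ ≤ odot (θ a b) (F b) := hom _ _ _ _ (htrans a a₀ b) le_rfl
  have h3 : F b ≤ θ a b := by
    rw [← hFab]
    calc F a = odot (θ a b) (F b) := hvs
      _ ≤ θ a b := hle2 _ _
  have h1 : odot (θ a z) (F z) < F a :=
    lt_of_le_of_ne (hsup a z) (fun h => hz (hmax a ha z h.symm))
  have h4 : θ a z < θ a b := by
    by_contra h
    push_neg at h
    refine hz (hmax a ha z ?_)
    have hv : odot (θ a z) (F a) = F a := by
      refine le_antisymm (hle1 _ _) ?_
      calc F a = odot (θ a b) (F b) := hvs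
        _ = odot (θ a b) (F a) := by rw [hFab]
        _ ≤ odot (θ a z) (F a) := hom _ _ _ _ h le_rfl
    have hFz : F a ≤ F z := by
      calc F a = odot (θ a z) (F a) := hv.symm
        _ = odot (θ z a) (F a) := by rw [hsymm]
        _ ≤ F z := hsup z a
    refine le_antisymm ?_ (hsup a z)
    calc F a = odot (θ a z) (F a) := hv.symm
      _ ≤ odot (θ a z) (F z) := hom _ _ _ _ le_rfl hFz
  exact ⟨h1, hFab, h3, h4⟩
end

section
/- Let θ be a ⊙-similarity relation and F, G : U → [0,1] with F = θ̄(F), G = θ̲(G). If E is a maximal E(F)-class and 𝓔 is a maximal ε(G)-class with E ∩ 𝓔 ≠ ∅, then E ⊆ 𝓔 or 𝓔 ⊆ E. -/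
open unitInterval

theorem stmt12 {U : Type*} (θ : U → U → unitInterval)
    (odot imp : unitInterval → unitInterval → unitInterval)
    (hoc : ∀ x y, odot x y = odot y x)
    (hoa : ∀ x y z, odot (odot x y) z = odot x (odot y z))
    (hom : ∀ x₁ x₂ y₁ y₂ : unitInterval, x₁ ≤ x₂ → y₁ ≤ y₂ → odot x₁ y₁ ≤ odot x₂ y₂)
    (hou : ∀ x, odot 1 x = x)
    (hi1 : ∀ x₁ x₂ y : unitInterval, x₁ ≤ x₂ → imp x₂ y ≤ imp x₁ y)
    (hi2 : ∀ x y₁ y₂ : unitInterval, y₁ ≤ y₂ → imp x y₁ ≤ imp x y₂)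
    (hi00 : imp 0 0 = 1) (hi01 : imp 0 1 = 1) (hi11 : imp 1 1 = 1) (hi10 : imp 1 0 = 0)
    (hib : ∀ x, imp 1 x = x)
    (hsetting :
      ((∀ (s : Set unitInterval) (x : unitInterval), odot (sSup s) x = ⨆ z ∈ s, odot z x) ∧
        (∀ x y : unitInterval, imp x y = sSup {z : unitInterval | odot x z ≤ y})) ∨
      (∃ (n : unitInterval → unitInterval) (oplus : unitInterval → unitInterval → unitInterval), (Antitone n ∧ n 0 = 1 ∧ n 1 = 0 ∧ (∀ x : unitInterval, n (n x) = x)) ∧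
        ((∀ x y : unitInterval, oplus x y = oplus y x) ∧
         (∀ x y z : unitInterval, oplus (oplus x y) z = oplus x (oplus y z)) ∧
         (∀ x : unitInterval, oplus 0 x = x) ∧
         (∀ x₁ x₂ y₁ y₂ : unitInterval, x₁ ≤ x₂ → y₁ ≤ y₂ → oplus x₁ y₁ ≤ oplus x₂ y₂)) ∧
        (∀ x y : unitInterval, n (oplus x y) = odot (n x) (n y)) ∧
        (∀ x y : unitInterval, imp x y = oplus (n x) y)))
    (hrefl : ∀ x, θ x x = 1)
    (hsymm : ∀ x y, θ x y = θ y x)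
    (htrans : ∀ x y z, odot (θ x y) (θ y z) ≤ θ x z)
    (F G : U → unitInterval)
    (hFfix : ∀ x, (⨆ y, odot (θ x y) (F y)) = F x)
    (hGfix : ∀ x, (⨅ y, imp (θ x y) (G y)) = G x)
    (E 𝓔 : Set U)
    (hclassE : ∃ a, a ∈ E ∧
      E = {x | F x = odot (θ x a) (F a) ∧ F a = odot (θ a x) (F x)})
    (hmaxE : ∀ a ∈ E, ∀ z, F a = odot (θ a z) (F z) → z ∈ E)
    (hclassG : ∃ a, a ∈ 𝓔 ∧
      𝓔 = {x | G x = imp (θ x a) (G a) ∧ G a = imp (θ a x) (G x)})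
    (hmaxG : ∀ a ∈ 𝓔, ∀ z, G a = imp (θ a z) (G z) → z ∈ 𝓔)
    (hne : (E ∩ 𝓔).Nonempty) :
    E ⊆ 𝓔 ∨ 𝓔 ⊆ E := by

  -- basic order facts
  have hle1 : ∀ x : unitInterval, x ≤ 1 := fun x => le_one'
  have hol : ∀ x y : unitInterval, odot x y ≤ y := fun x y => by
    calc odot x y ≤ odot 1 y := hom _ _ _ _ (hle1 x) le_rfl
    _ = y := hou y
  have hor : ∀ x y : unitInterval, odot x y ≤ x := fun x y => by
    rw [hoc]; exact hol y x
  have himp_ge : ∀ x y : unitInterval, y ≤ imp x y := fun x y => by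
    calc y = imp 1 y := (hib y).symm
    _ ≤ imp x y := hi1 _ _ _ (hle1 x)
  have hFub : ∀ a z, odot (θ a z) (F z) ≤ F a := fun a z => by
    rw [← hFfix a]; exact le_iSup (fun y => odot (θ a y) (F y)) z
  have hGlb : ∀ a z, G a ≤ imp (θ a z) (G z) := fun a z => by
    rw [← hGfix a]; exact iInf_le (fun y => imp (θ a y) (G y)) z
  -- exchange law
  have hexch : ∀ x y c : unitInterval, imp (odot x y) c ≤ imp x (imp y c) := by
    rcases hsetting with ⟨hdist, hres⟩ | ⟨n, oplus, ⟨hnmono, hn0, hn1, hnn⟩, ⟨hpc, hpa, hpu, hpm⟩, hdm, himps⟩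
    · intro x y c
      simp only [hres]
      apply sSup_le_sSup
      intro z hz
      simp only [Set.mem_setOf_eq] at hz ⊢
      apply le_sSup
      simp only [Set.mem_setOf_eq]
      calc odot y (odot x z) = odot (odot x y) z := by rw [← hoa, hoc y x]
      _ ≤ c := hz
    · intro x y c
      have hnd : ∀ a b, n (odot a b) = oplus (n a) (n b) := by
        intro a b
        have h := hdm (n a) (n b)
        rw [hnn, hnn] at h
        rw [← h, hnn]
      simp only [himps]
      rw [hnd, hpa]
  -- E side
  obtain ⟨a₀, ha₀, hEdef⟩ := hclassE
  have hmemE : ∀ x ∈ E, F x = odot (θ x a₀) (F a₀) ∧ F a₀ = odot (θ a₀ x) (F x) := by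
    intro x hx; rw [hEdef] at hx; exact hx
  have hFeq : ∀ x ∈ E, F x = F a₀ := by
    intro x hx
    obtain ⟨h1, h2⟩ := hmemE x hx
    exact le_antisymm (h1 ▸ hol _ _) (h2 ▸ hol _ _)
  have hFE : ∀ a ∈ E, ∀ b ∈ E, F a = odot (θ a b) (F b) := by
    intro a ha b hb
    refine le_antisymm ?_ (hFub a b)
    obtain ⟨ha1, _⟩ := hmemE a ha
    obtain ⟨_, hb2⟩ := hmemE b hb
    calc F a = odot (θ a a₀) (F a₀) := ha1
    _ = odot (θ a a₀) (odot (θ a₀ b) (F b)) := by rw [← hb2]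
    _ = odot (odot (θ a a₀) (θ a₀ b)) (F b) := (hoa _ _ _).symm
    _ ≤ odot (θ a b) (F b) := hom _ _ _ _ (htrans a a₀ b) le_rfl
  have hkeyE : ∀ a ∈ E, ∀ b ∈ E, ∀ z, z ∉ E → θ a z < θ a b := by
    intro a ha b hb z hz
    by_contra hcon
    push_neg at hcon
    apply hz
    apply hmaxE a ha z
    have hfa : F a = odot (θ a b) (F a) := by
      have h := hFE a ha b hb
      rwa [hFeq b hb, ← hFeq a ha] at h
    refine le_antisymm ?_ (hFub a z)
    have hza : odot (θ a z) (F a) ≤ F z := by rw [hsymm a z]; exact hFub z a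
    calc F a = odot (odot (θ a b) (θ a b)) (F a) := by
          rw [hoa, ← hfa, ← hfa]
    _ ≤ odot (odot (θ a z) (θ a z)) (F a) :=
          hom _ _ _ _ (hom _ _ _ _ hcon hcon) le_rfl
    _ = odot (θ a z) (odot (θ a z) (F a)) := hoa _ _ _
    _ ≤ odot (θ a z) (F z) := hom _ _ _ _ le_rfl hza
  -- G side
  obtain ⟨b₀, hb₀, hGdef⟩ := hclassG
  have hmemG : ∀ x ∈ 𝓔, G x = imp (θ x b₀) (G b₀) ∧ G b₀ = imp (θ b₀ x) (G x) := by
    intro x hx; rw [hGdef] at hx; exact hx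
  have hGeq : ∀ x ∈ 𝓔, G x = G b₀ := by
    intro x hx
    obtain ⟨h1, h2⟩ := hmemG x hx
    exact le_antisymm (h2 ▸ himp_ge _ _) (h1 ▸ himp_ge _ _)
  have hGE : ∀ a ∈ 𝓔, ∀ b ∈ 𝓔, G a = imp (θ a b) (G b) := by
    intro a ha b hb
    refine le_antisymm (hGlb a b) ?_
    obtain ⟨ha1, _⟩ := hmemG a ha
    obtain ⟨_, hb2⟩ := hmemG b hb
    calc imp (θ a b) (G b) ≤ imp (odot (θ a b₀) (θ b₀ b)) (G b) :=
          hi1 _ _ _ (htrans a b₀ b)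
    _ ≤ imp (θ a b₀) (imp (θ b₀ b) (G b)) := hexch _ _ _
    _ = imp (θ a b₀) (G b₀) := by rw [← hb2]
    _ = G a := ha1.symm
  have hkeyG : ∀ a ∈ 𝓔, ∀ b ∈ 𝓔, ∀ z, z ∉ 𝓔 → θ a z < θ a b := by
    intro a ha b hb z hz
    by_contra hcon
    push_neg at hcon
    apply hz
    apply hmaxG a ha z
    have hga : G a = imp (θ a b) (G a) := by
      have h := hGE a ha b hb
      rwa [hGeq b hb, ← hGeq a ha] at h
    refine le_antisymm (hGlb a z) ?_
    have hza : G z ≤ imp (θ a z) (G a) := by rw [← hsymm z a]; exact hGlb z a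
    calc imp (θ a z) (G z) ≤ imp (θ a z) (imp (θ a z) (G a)) := hi2 _ _ _ hza
    _ ≤ imp (θ a b) (imp (θ a b) (G a)) := by
          refine le_trans (hi1 _ _ _ hcon) (hi2 _ _ _ (hi1 _ _ _ hcon))
    _ = G a := by rw [← hga, ← hga]
  -- main argument
  by_contra hcontra
  push_neg at hcontra
  obtain ⟨hnE, hnG⟩ := hcontra
  obtain ⟨p, hpE, hpnG⟩ := Set.not_subset.mp hnE
  obtain ⟨q, hqG, hqnE⟩ := Set.not_subset.mp hnG
  obtain ⟨c, hcE, hcG⟩ := hne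
  exact absurd (hkeyG c hcG q hqG p hpnG) (lt_asymm (hkeyE c hcE p hpE q hqnE))
end

section
/- Let θ be a similarity relation (min-transitive), F = θ̄(F), G = θ̲(G) for ⊙ = min and ▷ the S-implicator max(n(·),·) with n involutive. If E is an E(F)-class, 𝓔 an ε(G)-class with E ∩ 𝓔 ≠ ∅, then for all x ∈ E and y ∈ 𝓔, (x,y) ∈ R(F) or (y,x) ∈ ρ(G). -/
open unitInterval

theorem stmt13 {U : Type*} (θ : U → U → unitInterval)
    (n : unitInterval → unitInterval)
    (hna : Antitone n) (hn0 : n 0 = 1) (hn1 : n 1 = 0) (hni : ∀ x, n (n x) = x)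
    (hrefl : ∀ x, θ x x = 1)
    (hsymm : ∀ x y, θ x y = θ y x)
    (htrans : ∀ x y z, θ x y ⊓ θ y z ≤ θ x z)
    (F G : U → unitInterval)
    (hFfix : ∀ x, (⨆ y, θ x y ⊓ F y) = F x)
    (hGfix : ∀ x, (⨅ y, n (θ x y) ⊔ G y) = G x)
    (E 𝓔 : Set U)
    (hclassE : ∃ a, a ∈ E ∧
      E = {x | F x = θ x a ⊓ F a ∧ F a = θ a x ⊓ F x})
    (hclassG : ∃ a, a ∈ 𝓔 ∧
      𝓔 = {x | G x = n (θ x a) ⊔ G a ∧ G a = n (θ a x) ⊔ G x})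
    (hne : (E ∩ 𝓔).Nonempty) :
    ∀ x ∈ E, ∀ y ∈ 𝓔, (F x = θ x y ⊓ F y) ∨ (G y = n (θ y x) ⊔ G x) := by
  obtain ⟨a, haE, hEeq⟩ := hclassE
  obtain ⟨b, hbG, hGeq⟩ := hclassG
  obtain ⟨c, hcE, hcG⟩ := hne
  intro x hx y hy
  have hRle : ∀ u v : U, θ u v ⊓ F v ≤ F u := fun u v =>
    (hFfix u) ▸ le_iSup (fun w => θ u w ⊓ F w) v
  have hρle : ∀ u v : U, G u ≤ n (θ u v) ⊔ G v := fun u v =>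
    (hGfix u) ▸ iInf_le (fun w => n (θ u w) ⊔ G w) v
  rw [hEeq] at hx hcE
  rw [hGeq] at hy hcG
  -- F x ≤ θ x c
  have hFxc : F x ≤ θ x c := by
    have h1 : F x ≤ θ x a ⊓ F a := le_of_eq hx.1
    have h2 : F a ≤ θ a c := hcE.2 ▸ inf_le_left
    calc F x ≤ θ x a ⊓ θ a c := le_inf (h1.trans inf_le_left) ((h1.trans inf_le_right).trans h2)
      _ ≤ θ x c := htrans x a c
  -- n (θ y c) ≤ G y
  have hGyc : n (θ y c) ≤ G y := by
    have h1 : n (θ y b) ≤ G y := hy.1 ▸ le_sup_left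
    have h2 : G b ≤ G y := hy.1 ▸ le_sup_right
    have h3 : n (θ b c) ≤ G b := hcG.2 ▸ le_sup_left
    have h4 : n (θ y c) ≤ n (θ y b ⊓ θ b c) := hna (htrans y b c)
    have h5 : n (θ y b ⊓ θ b c) ≤ n (θ y b) ⊔ n (θ b c) := by
      rcases le_total (θ y b) (θ b c) with h | h
      · rw [inf_eq_left.2 h]; exact le_sup_left
      · rw [inf_eq_right.2 h]; exact le_sup_right
    exact h4.trans (h5.trans (sup_le h1 (h3.trans h2)))
  rcases le_or_gt (F x) (θ x y) with hle | hlt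
  · left
    have h2 : F x ≤ F y := by
      have : θ y x ⊓ F x ≤ F y := hRle y x
      have hx' : F x ≤ θ y x := (hsymm x y) ▸ hle
      exact (le_inf hx' le_rfl).trans this
    exact le_antisymm (le_inf hle h2) (hRle x y)
  · right
    have hlt2 : θ x y < θ x c := lt_of_lt_of_le hlt hFxc
    have h3 : θ x c ⊓ θ c y ≤ θ x y := htrans x c y
    have h4 : θ c y ≤ θ x y := by
      rcases le_total (θ x c) (θ c y) with h | h
      · rw [inf_eq_left.2 h] at h3; exact absurd h3 (not_le.2 hlt2)
      · rw [inf_eq_right.2 h] at h3; exact h3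
    have h5 : n (θ y x) ≤ G y := by
      calc n (θ y x) = n (θ x y) := by rw [hsymm]
        _ ≤ n (θ c y) := hna h4
        _ = n (θ y c) := by rw [hsymm]
        _ ≤ G y := hGyc
    have h6 : G x ≤ G y := by
      have := hρle x y
      have h7 : n (θ x y) ≤ G y := (hsymm y x) ▸ h5
      exact this.trans (sup_le h7 le_rfl)
    exact le_antisymm (hρle y x) (sup_le h5 h6)
end

section
/- Let θ and f : U → [0,1] have finite ranges, θ a ⊙-similarity relation, F = θ̄(f). If E is a maximal E(F)-class, then for any a ∈ E, F(a) = max{f(y) : y ∈ E}. -/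
open unitInterval

theorem stmt14 {U : Type*} (θ : U → U → unitInterval)
    (odot imp : unitInterval → unitInterval → unitInterval)
    (hoc : ∀ x y, odot x y = odot y x)
    (hoa : ∀ x y z, odot (odot x y) z = odot x (odot y z))
    (hom : ∀ x₁ x₂ y₁ y₂ : unitInterval, x₁ ≤ x₂ → y₁ ≤ y₂ → odot x₁ y₁ ≤ odot x₂ y₂)
    (hou : ∀ x, odot 1 x = x)
    (hi1 : ∀ x₁ x₂ y : unitInterval, x₁ ≤ x₂ → imp x₂ y ≤ imp x₁ y)
    (hi2 : ∀ x y₁ y₂ : unitInterval, y₁ ≤ y₂ → imp x y₁ ≤ imp x y₂)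
    (hi00 : imp 0 0 = 1) (hi01 : imp 0 1 = 1) (hi11 : imp 1 1 = 1) (hi10 : imp 1 0 = 0)
    (hib : ∀ x, imp 1 x = x)
    (hsetting :
      ((∀ (s : Set unitInterval) (x : unitInterval), odot (sSup s) x = ⨆ z ∈ s, odot z x) ∧
        (∀ x y : unitInterval, imp x y = sSup {z : unitInterval | odot x z ≤ y})) ∨
      (∃ (n : unitInterval → unitInterval) (oplus : unitInterval → unitInterval → unitInterval), (Antitone n ∧ n 0 = 1 ∧ n 1 = 0 ∧ (∀ x : unitInterval, n (n x) = x)) ∧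
        ((∀ x y : unitInterval, oplus x y = oplus y x) ∧
         (∀ x y z : unitInterval, oplus (oplus x y) z = oplus x (oplus y z)) ∧
         (∀ x : unitInterval, oplus 0 x = x) ∧
         (∀ x₁ x₂ y₁ y₂ : unitInterval, x₁ ≤ x₂ → y₁ ≤ y₂ → oplus x₁ y₁ ≤ oplus x₂ y₂)) ∧
        (∀ x y : unitInterval, n (oplus x y) = odot (n x) (n y)) ∧
        (∀ x y : unitInterval, imp x y = oplus (n x) y)))
    (hrefl : ∀ x, θ x x = 1)
    (hsymm : ∀ x y, θ x y = θ y x)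
    (htrans : ∀ x y z, odot (θ x y) (θ y z) ≤ θ x z)
    (hθfin : (Set.range fun p : U × U => θ p.1 p.2).Finite)
    (f F : U → unitInterval)
    (hffin : (Set.range f).Finite)
    (hF : ∀ x, F x = ⨆ y, odot (θ x y) (f y))
    (E : Set U)
    (hclass : ∃ a, a ∈ E ∧
      E = {x | F x = odot (θ x a) (F a) ∧ F a = odot (θ a x) (F x)})
    (hmax : ∀ a ∈ E, ∀ z, F a = odot (θ a z) (F z) → z ∈ E) :
    ∀ a ∈ E, IsGreatest (f '' E) (F a) := by
  obtain ⟨a₀, ha₀E, hEdef⟩ := hclass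
  have hle1 : ∀ x : unitInterval, x ≤ 1 := fun x => le_one'
  have hol : ∀ x y : unitInterval, odot x y ≤ y := fun x y => by
    calc odot x y ≤ odot 1 y := hom _ _ _ _ (hle1 x) le_rfl
      _ = y := hou y
  have hflF : ∀ x, f x ≤ F x := by
    intro x
    rw [hF]
    have h1 : f x = odot (θ x x) (f x) := by rw [hrefl, hou]
    rw [h1]
    exact le_iSup (fun y => odot (θ x y) (f y)) x
  have hattain : ∀ x, ∃ y, F x = odot (θ x y) (f y) := by
    intro x
    have hfin : (Set.range (fun y => odot (θ x y) (f y))).Finite := by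
      apply Set.Finite.subset (Set.Finite.image2 odot hθfin hffin)
      rintro _ ⟨y, rfl⟩
      exact ⟨θ x y, ⟨(x, y), rfl⟩, f y, ⟨y, rfl⟩, rfl⟩
    haveI : Nonempty U := ⟨a₀⟩
    have hnem : (Set.range (fun y => odot (θ x y) (f y))).Nonempty :=
      Set.range_nonempty _
    obtain ⟨y, hy⟩ := hnem.csSup_mem hfin
    exact ⟨y, by rw [hF x, iSup]; exact hy.symm⟩
  have hUB : ∀ x y, odot (θ x y) (F y) ≤ F x := by
    intro x y
    obtain ⟨z, hz⟩ := hattain y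
    rw [hz, ← hoa]
    calc odot (odot (θ x y) (θ y z)) (f z) ≤ odot (θ x z) (f z) :=
          hom _ _ _ _ (htrans x y z) le_rfl
      _ ≤ F x := by rw [hF]; exact le_iSup (fun y => odot (θ x y) (f y)) z
  have hEeq : ∀ x ∈ E, ∀ y ∈ E, F x ≤ F y := by
    intro x hx y hy
    rw [hEdef] at hx hy
    obtain ⟨hx1, _⟩ := hx
    obtain ⟨_, hy2⟩ := hy
    calc F x = odot (θ x a₀) (F a₀) := hx1
      _ = odot (θ x a₀) (odot (θ a₀ y) (F y)) := by rw [← hy2]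
      _ = odot (odot (θ x a₀) (θ a₀ y)) (F y) := (hoa _ _ _).symm
      _ ≤ odot (θ x y) (F y) := hom _ _ _ _ (htrans x a₀ y) le_rfl
      _ ≤ F y := hol _ _
  intro a ha
  constructor
  · obtain ⟨y, hy⟩ := hattain a
    have hFay : F a = odot (θ a y) (F y) := by
      refine le_antisymm ?_ (hUB a y)
      rw [hy]; exact hom _ _ _ _ le_rfl (hflF y)
    have hyE : y ∈ E := hmax a ha y hFay
    have h1 : F a ≤ f y := hy.le.trans (hol _ _)
    have h2 : f y ≤ F a := (hflF y).trans (hEeq y hyE a ha)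
    exact ⟨y, hyE, le_antisymm h2 h1⟩
  · rintro _ ⟨y, hyE, rfl⟩
    exact (hflF y).trans (hEeq y hyE a ha)
end

section
/- Let θ and g : U → [0,1] have finite ranges, θ a ⊙-similarity relation, G = θ̲(g). If 𝓔 is a maximal ε(G)-class, then for any a ∈ 𝓔, G(a) = min{g(y) : y ∈ 𝓔}. -/
open unitInterval

theorem stmt15 {U : Type*} (θ : U → U → unitInterval)
    (odot imp : unitInterval → unitInterval → unitInterval)
    (hoc : ∀ x y, odot x y = odot y x)
    (hoa : ∀ x y z, odot (odot x y) z = odot x (odot y z))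
    (hom : ∀ x₁ x₂ y₁ y₂ : unitInterval, x₁ ≤ x₂ → y₁ ≤ y₂ → odot x₁ y₁ ≤ odot x₂ y₂)
    (hou : ∀ x, odot 1 x = x)
    (hi1 : ∀ x₁ x₂ y : unitInterval, x₁ ≤ x₂ → imp x₂ y ≤ imp x₁ y)
    (hi2 : ∀ x y₁ y₂ : unitInterval, y₁ ≤ y₂ → imp x y₁ ≤ imp x y₂)
    (hi00 : imp 0 0 = 1) (hi01 : imp 0 1 = 1) (hi11 : imp 1 1 = 1) (hi10 : imp 1 0 = 0)
    (hib : ∀ x, imp 1 x = x)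
    (hsetting :
      ((∀ (s : Set unitInterval) (x : unitInterval), odot (sSup s) x = ⨆ z ∈ s, odot z x) ∧
        (∀ x y : unitInterval, imp x y = sSup {z : unitInterval | odot x z ≤ y})) ∨
      (∃ (n : unitInterval → unitInterval) (oplus : unitInterval → unitInterval → unitInterval), (Antitone n ∧ n 0 = 1 ∧ n 1 = 0 ∧ (∀ x : unitInterval, n (n x) = x)) ∧
        ((∀ x y : unitInterval, oplus x y = oplus y x) ∧
         (∀ x y z : unitInterval, oplus (oplus x y) z = oplus x (oplus y z)) ∧
         (∀ x : unitInterval, oplus 0 x = x) ∧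
         (∀ x₁ x₂ y₁ y₂ : unitInterval, x₁ ≤ x₂ → y₁ ≤ y₂ → oplus x₁ y₁ ≤ oplus x₂ y₂)) ∧
        (∀ x y : unitInterval, n (oplus x y) = odot (n x) (n y)) ∧
        (∀ x y : unitInterval, imp x y = oplus (n x) y)))
    (hrefl : ∀ x, θ x x = 1)
    (hsymm : ∀ x y, θ x y = θ y x)
    (htrans : ∀ x y z, odot (θ x y) (θ y z) ≤ θ x z)
    (hθfin : (Set.range fun p : U × U => θ p.1 p.2).Finite)
    (g G : U → unitInterval)
    (hgfin : (Set.range g).Finite)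
    (hG : ∀ x, G x = ⨅ y, imp (θ x y) (g y))
    (𝓔 : Set U)
    (hclass : ∃ a, a ∈ 𝓔 ∧
      𝓔 = {x | G x = imp (θ x a) (G a) ∧ G a = imp (θ a x) (G x)})
    (hmax : ∀ a ∈ 𝓔, ∀ z, G a = imp (θ a z) (G z) → z ∈ 𝓔) :
    ∀ a ∈ 𝓔, IsLeast (g '' 𝓔) (G a) := by
  obtain ⟨a₀, ha₀, hE⟩ := hclass
  have hle1 : ∀ x : unitInterval, x ≤ 1 := fun x => le_one'
  have himp_ge : ∀ x w : unitInterval, w ≤ imp x w := by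
    intro x w
    calc w = imp 1 w := (hib w).symm
    _ ≤ imp x w := hi1 x 1 w (hle1 x)
  -- exchange property
  have exch : ∀ x y w : unitInterval, imp (odot x y) w ≤ imp x (imp y w) := by
    rcases hsetting with ⟨hsup, himp⟩ |
      ⟨n, oplus, ⟨hna, hn0, hn1, hnn⟩, ⟨hpc, hpa, hpu, hpm⟩, hdm, himp⟩
    · have res : ∀ x z y : unitInterval, odot x z ≤ y ↔ z ≤ imp x y := by
        intro x z y
        constructor
        · intro h; rw [himp]; exact le_sSup h
        · intro h
          have h1 : odot x z ≤ odot x (imp x y) := hom x x z _ le_rfl h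
          have h2 : odot x (imp x y) ≤ y := by
            rw [hoc, himp, hsup]
            exact iSup₂_le fun w hw => (hoc w x) ▸ hw
          exact h1.trans h2
      intro x y w
      rw [← res, ← res]
      have heq : odot y (odot x (imp (odot x y) w)) = odot (odot x y) (imp (odot x y) w) := by
        rw [← hoa, hoc y x]
      rw [heq]
      exact (res _ _ _).mpr le_rfl
    · intro x y w
      have hxy : n (odot x y) = oplus (n x) (n y) := by
        have h : odot x y = n (oplus (n x) (n y)) := by rw [hdm, hnn, hnn]
        rw [h, hnn]
      rw [himp, himp, himp, hxy, hpa]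
  have hGle : ∀ x, G x ≤ g x := by
    intro x
    rw [hG]
    calc (⨅ y, imp (θ x y) (g y)) ≤ imp (θ x x) (g x) := iInf_le _ x
    _ = g x := by rw [hrefl, hib]
  -- attainment of the infimum
  have hatt : ∀ x : U, ∃ y₀, G x = imp (θ x y₀) (g y₀) := by
    intro x
    have hθx : (Set.range fun y => θ x y).Finite :=
      hθfin.subset (by rintro _ ⟨y, rfl⟩; exact ⟨(x, y), rfl⟩)
    have hfin : (Set.range fun y => imp (θ x y) (g y)).Finite := by
      apply (Set.Finite.image2 imp hθx hgfin).subset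
      rintro _ ⟨y, rfl⟩
      exact Set.mem_image2_of_mem ⟨y, rfl⟩ ⟨y, rfl⟩
    have hne : (Set.range fun y => imp (θ x y) (g y)).Nonempty := ⟨_, ⟨x, rfl⟩⟩
    have hmem := hne.csInf_mem hfin
    rw [sInf_range] at hmem
    obtain ⟨y₀, hy₀⟩ := hmem
    exact ⟨y₀, by rw [hG, ← hy₀]⟩
  -- G a ≤ imp (θ a y) (G y) for all a y
  have hlower : ∀ x y, G x ≤ imp (θ x y) (G y) := by
    intro x y
    obtain ⟨z₀, hz₀⟩ := hatt y
    rw [hz₀]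
    calc G x = ⨅ z, imp (θ x z) (g z) := hG x
    _ ≤ imp (θ x z₀) (g z₀) := iInf_le _ z₀
    _ ≤ imp (odot (θ x y) (θ y z₀)) (g z₀) := hi1 _ _ _ (htrans x y z₀)
    _ ≤ imp (θ x y) (imp (θ y z₀) (g z₀)) := exch _ _ _
  -- G is constant on 𝓔
  have hconst : ∀ y ∈ 𝓔, G y = G a₀ := by
    intro y hy
    rw [hE] at hy
    obtain ⟨h1, h2⟩ := hy
    apply le_antisymm
    · rw [h2]; exact himp_ge _ _
    · rw [h1]; exact himp_ge _ _
  intro a ha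
  obtain ⟨y₀, hy₀eq⟩ := hatt a
  have h1 : imp (θ a y₀) (G y₀) ≤ G a := by
    rw [hy₀eq]; exact hi2 _ _ _ (hGle y₀)
  have h2 : G a = imp (θ a y₀) (G y₀) := le_antisymm (hlower a y₀) h1
  have hy₀E : y₀ ∈ 𝓔 := hmax a ha y₀ h2
  have hga : g y₀ ≤ G a := by rw [hy₀eq]; exact himp_ge _ _
  have hGay : G a = G y₀ := (hconst a ha).trans (hconst y₀ hy₀E).symm
  have hga2 : G a ≤ g y₀ := by rw [hGay]; exact hGle y₀
  constructor
  · exact ⟨y₀, hy₀E, le_antisymm hga hga2⟩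
  · rintro _ ⟨y, hyE, rfl⟩
    calc G a = G y := (hconst a ha).trans (hconst y hyE).symm
    _ ≤ g y := hGle y
end

section
/- Let θ be a similarity relation with finite range, ⊙ = min, F : U → [0,1] with F = θ̄(F). If {a} is a maximal E(F)-class (equivalently, F(a) > θ(a,y) for all y ≠ a), then for any h : U → [0,1] with θ̄(h)(a) ≥ F(a), one has θ̄(h)(a) = h(a). -/
open unitInterval

/-!
Bound each term `θ a y ⊓ h y` by `h a` at `y = a` and by `θ a y` elsewhere. These bounds take
only finitely many values, all below `F a` as soon as `h a < F a`, so their supremum, which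
dominates `θ̄(h)(a) ≥ F a`, is attained and lies below `F a`: a contradiction. Hence
`F a ≤ h a`, and then every bound is at most `h a`.
-/

open Set Function

theorem Set.Finite.range_update {ι α : Type*} [DecidableEq ι] {f : ι → α}
    (hf : (range f).Finite) (i : ι) (b : α) : (range (update f i b)).Finite :=
  (hf.insert b).subset <| by
    rintro _ ⟨j, rfl⟩
    rcases eq_or_ne j i with rfl | hj
    · simp
    · simp [hj]

theorem iSup_inf_le_iSup_update {ι α : Type*} [DecidableEq ι] [CompleteLattice α]
    (f g : ι → α) (i : ι) : ⨆ j, f j ⊓ g j ≤ ⨆ j, update f i (g i) j := by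
  refine iSup_mono fun j => ?_
  rcases eq_or_ne j i with rfl | hj
  · simp
  · simp [hj]

theorem iSup_lt_of_finite_range {ι α : Type*} [Nonempty ι] [CompleteLinearOrder α] {g : ι → α}
    {b : α} (hg : (range g).Finite) (hlt : ∀ i, g i < b) : ⨆ i, g i < b := by
  obtain ⟨i, hi⟩ := (range_nonempty g).csSup_mem hg
  rw [iSup, ← hi]
  exact hlt i

theorem stmt16_general {U : Type*} (θ : U → U → unitInterval)
    (hrefl : ∀ x, θ x x = 1)
    (hθfin : (Set.range fun p : U × U => θ p.1 p.2).Finite)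
    (F : U → unitInterval)
    (a : U)
    (hsing : ∀ y, y ≠ a → θ a y < F a) :
    ∀ h : U → unitInterval, F a ≤ (⨆ y, θ a y ⊓ h y) → (⨆ y, θ a y ⊓ h y) = h a := by
  classical
  intro h hle
  set g := update (θ a) a (h a)
  have hbound : ⨆ y, θ a y ⊓ h y ≤ ⨆ y, g y := iSup_inf_le_iSup_update (θ a) h a
  have hha : h a ≤ ⨆ y, θ a y ⊓ h y := by
    refine le_iSup_of_le a ?_
    rw [hrefl, inf_eq_right.mpr le_one']
  have hg_fin : (range g).Finite :=
    (hθfin.subset (range_subset_iff.2 fun y => ⟨(a, y), rfl⟩)).range_update a (h a)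
  have hFh : F a ≤ h a := by
    by_contra! hlt
    have hg_lt : ∀ y, g y < F a := fun y => by
      rcases eq_or_ne y a with rfl | hy
      · simpa [g] using hlt
      · simpa [g, hy] using hsing y hy
    have : Nonempty U := ⟨a⟩
    exact (hle.trans hbound).not_gt (iSup_lt_of_finite_range hg_fin hg_lt)
  refine le_antisymm (hbound.trans (iSup_le fun y => ?_)) hha
  rcases eq_or_ne y a with rfl | hy
  · simp [g]
  · simpa [g, hy] using (hsing y hy).le.trans hFh

theorem stmt16 {U : Type*} (θ : U → U → unitInterval)
    (hrefl : ∀ x, θ x x = 1)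
    (hsymm : ∀ x y, θ x y = θ y x)
    (htrans : ∀ x y z, θ x y ⊓ θ y z ≤ θ x z)
    (hθfin : (Set.range fun p : U × U => θ p.1 p.2).Finite)
    (F : U → unitInterval)
    (hFfix : ∀ x, (⨆ y, θ x y ⊓ F y) = F x)
    (a : U)
    (hsing : ∀ y, y ≠ a → θ a y < F a) :
    ∀ h : U → unitInterval, F a ≤ (⨆ y, θ a y ⊓ h y) → (⨆ y, θ a y ⊓ h y) = h a :=
  stmt16_general θ hrefl hθfin F a hsing
end

section
/- Let θ be a similarity relation with finite range, n an involutive negator, G : U → [0,1] with G = θ̲(G) where θ̲(h)(x) = inf_y max(n(θ(x,y)), h(y)). If {b} is a maximal ε(G)-class (equivalently, G(b) < n(θ(b,y)) for all y ≠ b), then for any h : U → [0,1] with θ̲(h)(b) ≤ G(b), one has θ̲(h)(b) = h(b). -/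
open unitInterval

theorem stmt17 {U : Type*} (θ : U → U → unitInterval)
    (n : unitInterval → unitInterval)
    (hna : Antitone n) (hn0 : n 0 = 1) (hn1 : n 1 = 0) (hni : ∀ x, n (n x) = x)
    (hrefl : ∀ x, θ x x = 1)
    (hsymm : ∀ x y, θ x y = θ y x)
    (htrans : ∀ x y z, θ x y ⊓ θ y z ≤ θ x z)
    (hθfin : (Set.range fun p : U × U => θ p.1 p.2).Finite)
    (G : U → unitInterval)
    (hGfix : ∀ x, (⨅ y, n (θ x y) ⊔ G y) = G x)
    (b : U)
    (hsing : ∀ y, y ≠ b → G b < n (θ b y)) :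
    ∀ h : U → unitInterval, (⨅ y, n (θ b y) ⊔ h y) ≤ G b →
      (⨅ y, n (θ b y) ⊔ h y) = h b := by
  intro h hle
  have htermb : n (θ b b) ⊔ h b = h b := by
    rw [hrefl, hn1]
    exact sup_eq_right.mpr (h b).2.1
  have hsplit : (⨅ y, n (θ b y) ⊔ h y)
      = (⨅ y, ⨅ _ : y = b, n (θ b y) ⊔ h y) ⊓
        (⨅ y, ⨅ _ : ¬ y = b, n (θ b y) ⊔ h y) :=
    iInf_split _ _
  have h1 : (⨅ y, ⨅ _ : y = b, n (θ b y) ⊔ h y) = h b := by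
    rw [iInf_iInf_eq_left]
    exact htermb
  by_cases hall : ∀ y : U, y = b
  · refine le_antisymm ?_ ?_
    · calc (⨅ y, n (θ b y) ⊔ h y) ≤ n (θ b b) ⊔ h b := iInf_le _ b
        _ = h b := htermb
    · refine le_iInf fun y => ?_
      rw [hall y, htermb]
  · push_neg at hall
    obtain ⟨y₀, hy₀⟩ := hall
    set S : Set unitInterval := (fun y => n (θ b y)) '' {y | y ≠ b} with hS
    have hSfin : S.Finite := by
      apply Set.Finite.subset (hθfin.image n)
      rintro x ⟨y, _, rfl⟩
      exact ⟨θ b y, ⟨(b, y), rfl⟩, rfl⟩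
    have hSne : S.Nonempty := ⟨n (θ b y₀), y₀, hy₀, rfl⟩
    obtain ⟨y₁, hy₁, hAy₁⟩ := hSne.csInf_mem hSfin
    have hGA : G b < sInf S := hAy₁ ▸ hsing y₁ hy₁
    have hAX : sInf S ≤ ⨅ y, ⨅ _ : ¬ y = b, n (θ b y) ⊔ h y := by
      refine le_iInf fun y => le_iInf fun hy => ?_
      exact le_trans (csInf_le hSfin.bddBelow ⟨y, hy, rfl⟩) le_sup_left
    have hIltX : (⨅ y, n (θ b y) ⊔ h y) < ⨅ y, ⨅ _ : ¬ y = b, n (θ b y) ⊔ h y :=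
      lt_of_le_of_lt hle (lt_of_lt_of_le hGA hAX)
    rw [hsplit, h1] at hIltX ⊢
    rcases inf_lt_iff.mp hIltX with hlt | hlt
    · exact inf_eq_left.mpr hlt.le
    · exact absurd hlt (lt_irrefl _)
end
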